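/- arXiv:2604.08473 — 5 statements merged into one kernel-verified Lean document; each statement's English description precedes it below -/
import Mathlib

section
/- Let s₀ and s₁ be real numbers with s₁ ≥ s₀ > 0, let χ : ℝ → ℝ be a continuously differentiable function with 0 ≤ χ ≤ 1, χ(t) = 0 for t ≤ 1/2, χ(t) = 1 for t ≥ 1, and 0 ≤ χ′ ≤ 3, and define φ(s) = −(8/(s₁+s₀−s))·χ(s/s₀) for s ∈ [0, s₁+s₀). Then for every s ∈ [0, s₀) one has |φ′(s)| ≤ 32/(s₁s₀). -/
/-- With `s₁ ≥ s₀ > 0`, `χ : ℝ → ℝ` a `C¹` cutoff with `0 ≤ χ ≤ 1`, `χ = 0` on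
`(-∞, 1/2]`, `χ = 1` on `[1, ∞)`, `0 ≤ χ′ ≤ 3`, and
`φ(s) = −(8/(s₁+s₀−s))·χ(s/s₀)`, one has `|φ′(s)| ≤ 32/(s₁s₀)` for every `s ∈ [0, s₀)`. -/
theorem stmt_2 (s₀ s₁ : ℝ) (hs₀ : 0 < s₀) (hs₁ : s₀ ≤ s₁)
    (χ : ℝ → ℝ) (hχ : ContDiff ℝ 1 χ)
    (hχ0 : ∀ t, 0 ≤ χ t) (hχ1 : ∀ t, χ t ≤ 1)
    (hχa : ∀ t, t ≤ 1 / 2 → χ t = 0) (hχb : ∀ t, 1 ≤ t → χ t = 1)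
    (hχ'0 : ∀ t, 0 ≤ deriv χ t) (hχ'3 : ∀ t, deriv χ t ≤ 3)
    (φ : ℝ → ℝ) (hφ : ∀ s, φ s = -(8 / (s₁ + s₀ - s)) * χ (s / s₀)) :
    ∀ s, 0 ≤ s → s < s₀ → |deriv φ s| ≤ 32 / (s₁ * s₀) := by
  have hφext : φ = fun s => -(8 / (s₁ + s₀ - s)) * χ (s / s₀) := funext hφ
  intro s hs0 hss
  have hc : (0:ℝ) < s₁ + s₀ - s := by linarith
  have hcs : s₁ < s₁ + s₀ - s := by linarith
  have h1 : HasDerivAt (fun x : ℝ => s₁ + s₀ - x) (-1) s := by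
    simpa using (hasDerivAt_id s).const_sub (s₁ + s₀)
  have hf : HasDerivAt (fun x : ℝ => -(8 / (s₁ + s₀ - x)))
      (-((0 * (s₁ + s₀ - s) - 8 * (-1)) / (s₁ + s₀ - s) ^ 2)) s :=
    ((hasDerivAt_const s (8:ℝ)).div h1 (ne_of_gt hc)).neg
  have hχd : HasDerivAt χ (deriv χ (s / s₀)) (s / s₀) :=
    ((hχ.differentiable one_ne_zero) (s / s₀)).hasDerivAt
  have hg : HasDerivAt (fun x : ℝ => χ (x / s₀)) (deriv χ (s / s₀) * (1 / s₀)) s := by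
    have hid : HasDerivAt (fun x : ℝ => x / s₀) (1 / s₀) s := by
      simpa using (hasDerivAt_id s).div_const s₀
    exact hχd.comp s hid
  have hD : HasDerivAt φ
      (-((0 * (s₁ + s₀ - s) - 8 * (-1)) / (s₁ + s₀ - s) ^ 2) * χ (s / s₀)
        + (-(8 / (s₁ + s₀ - s))) * (deriv χ (s / s₀) * (1 / s₀))) s := by
    rw [hφext]; exact hf.mul hg
  rw [hD.deriv]
  set c := s₁ + s₀ - s with hcdef
  set u := χ (s / s₀) with hu
  set v := deriv χ (s / s₀) with hv
  have hu0 : 0 ≤ u := hχ0 _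
  have hu1 : u ≤ 1 := hχ1 _
  have hv0 : 0 ≤ v := hχ'0 _
  have hv3 : v ≤ 3 := hχ'3 _
  have hs₁0 : 0 < s₁ := lt_of_lt_of_le hs₀ hs₁
  have hpos : 0 < s₁ * s₀ := mul_pos hs₁0 hs₀
  rw [abs_le]
  have hc2 : s₁ * s₀ < c ^ 2 := by nlinarith
  have key1 : 8 / c ^ 2 * u ≤ 8 / (s₁ * s₀) := by
    have h8 : 8 / c ^ 2 ≤ 8 / (s₁ * s₀) := by
      apply div_le_div_of_nonneg_left (by norm_num) hpos (le_of_lt hc2)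
    calc 8 / c ^ 2 * u ≤ 8 / c ^ 2 * 1 := by
          apply mul_le_mul_of_nonneg_left hu1 (by positivity)
      _ ≤ 8 / (s₁ * s₀) := by simpa using h8
  have key2 : 8 / c * (v * (1 / s₀)) ≤ 24 / (s₁ * s₀) := by
    have h8 : 8 / c ≤ 8 / s₁ := by
      apply div_le_div_of_nonneg_left (by norm_num) hs₁0 (le_of_lt hcs)
    have : 8 / c * (v * (1 / s₀)) ≤ 8 / s₁ * (3 * (1 / s₀)) := by
      apply mul_le_mul h8 _ (by positivity) (by positivity)
      apply mul_le_mul_of_nonneg_right hv3 (by positivity)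
    calc 8 / c * (v * (1 / s₀)) ≤ 8 / s₁ * (3 * (1 / s₀)) := this
      _ = 24 / (s₁ * s₀) := by field_simp; ring
  have hterm1 : 0 ≤ 8 / c ^ 2 * u := by positivity
  have hterm2 : 0 ≤ 8 / c * (v * (1 / s₀)) := by positivity
  have heq : -((0 * c - 8 * (-1)) / c ^ 2) * u + -(8 / c) * (v * (1 / s₀))
      = -(8 / c ^ 2 * u + 8 / c * (v * (1 / s₀))) := by ring
  have h32 : 8 / (s₁ * s₀) + 24 / (s₁ * s₀) = 32 / (s₁ * s₀) := by ring
  rw [heq]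
  constructor
  · linarith
  · linarith
end

section
/- Let s₀ and s₁ be real numbers with s₁ ≥ s₀ > 0, let χ : ℝ → ℝ be a continuously differentiable function with 0 ≤ χ ≤ 1, χ(t) = 0 for t ≤ 1/2, χ(t) = 1 for t ≥ 1, and 0 ≤ χ′ ≤ 3, and define φ(s) = −(8/(s₁+s₀−s))·χ(s/s₀) for s ∈ [0, s₁+s₀). Let Q : [0, s₁+s₀) → ℝ satisfy Q(s) > 0 for all s ∈ [0, s₁+s₀) and Q(s) > 128/(s₁s₀) for all s ∈ [0, s₀). Then Q(s) + (1/2)φ(s)² − 4|φ′(s)| > 0 for every s ∈ [0, s₁+s₀). -/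
set_option maxHeartbeats 1000000 in
/-- With `s₁ ≥ s₀ > 0`, `χ : ℝ → ℝ` a `C¹` cutoff with `0 ≤ χ ≤ 1`, `χ = 0` on
`(-∞, 1/2]`, `χ = 1` on `[1, ∞)`, `0 ≤ χ′ ≤ 3`, and
`φ(s) = −(8/(s₁+s₀−s))·χ(s/s₀)`, and `Q : [0, s₁+s₀) → ℝ` with `Q > 0` everywhere and
`Q(s) > 128/(s₁s₀)` for `s ∈ [0, s₀)`, one has
`Q(s) + (1/2)φ(s)² − 4|φ′(s)| > 0` for every `s ∈ [0, s₁+s₀)`. -/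
theorem stmt_5 (s₀ s₁ : ℝ) (hs₀ : 0 < s₀) (hs₁ : s₀ ≤ s₁)
    (χ : ℝ → ℝ) (hχ : ContDiff ℝ 1 χ)
    (hχ0 : ∀ t, 0 ≤ χ t) (hχ1 : ∀ t, χ t ≤ 1)
    (hχa : ∀ t, t ≤ 1 / 2 → χ t = 0) (hχb : ∀ t, 1 ≤ t → χ t = 1)
    (hχ'0 : ∀ t, 0 ≤ deriv χ t) (hχ'3 : ∀ t, deriv χ t ≤ 3)
    (φ : ℝ → ℝ) (hφ : ∀ s, φ s = -(8 / (s₁ + s₀ - s)) * χ (s / s₀))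
    (Q : ℝ → ℝ) (hQpos : ∀ s, 0 ≤ s → s < s₁ + s₀ → 0 < Q s)
    (hQbig : ∀ s, 0 ≤ s → s < s₀ → 128 / (s₁ * s₀) < Q s) :
    ∀ s, 0 ≤ s → s < s₁ + s₀ → 0 < Q s + (1 / 2) * (φ s) ^ 2 - 4 * |deriv φ s| := by
  have hχd : Differentiable ℝ χ := hχ.differentiable one_ne_zero
  have hφeq : φ = fun s => -(8 / (s₁ + s₀ - s)) * χ (s / s₀) := funext hφ
  intro s hs0 hslt
  set c : ℝ := s₁ + s₀ with hc
  have hr : 0 < c - s := by linarith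
  have hrne : c - s ≠ 0 := ne_of_gt hr
  set t : ℝ := s / s₀ with ht
  -- derivative of the inner rescaling
  have hinner : HasDerivAt (fun x : ℝ => x / s₀) (1 / s₀) s := by
    simpa using (hasDerivAt_id s).div_const s₀
  have hcomp : HasDerivAt (fun x : ℝ => χ (x / s₀)) (deriv χ t * (1 / s₀)) s :=
    ((hχd t).hasDerivAt).comp s hinner
  -- derivative of -(8/(c-x))
  have hsub : HasDerivAt (fun x : ℝ => c - x) (-1) s := by
    exact (hasDerivAt_id' s).const_sub c
  have hinv : HasDerivAt (fun x : ℝ => (c - x)⁻¹) (-(-1) / (c - s) ^ 2) s :=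
    hsub.inv hrne
  have hg : HasDerivAt (fun x : ℝ => -(8 / (c - x))) (-(8 / (c - s) ^ 2)) s := by
    have h := hinv.const_mul (-8 : ℝ)
    have hfun : (fun x : ℝ => -8 * (c - x)⁻¹) = fun x : ℝ => -(8 / (c - x)) := by
      funext x; ring
    rw [hfun] at h
    rw [show -(8 / (c - s) ^ 2) = -8 * (-(-1) / (c - s) ^ 2) by ring]; exact h
  have hD : HasDerivAt φ
      (-(8 / (c - s) ^ 2) * χ t + -(8 / (c - s)) * (deriv χ t * (1 / s₀))) s := by
    rw [hφeq]
    exact hg.mul hcomp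
  have hderiv : deriv φ s
      = -(8 / (c - s) ^ 2) * χ t + -(8 / (c - s)) * (deriv χ t * (1 / s₀)) :=
    hD.deriv
  have hχt0 := hχ0 t
  have hχt1 := hχ1 t
  have hχ't0 := hχ'0 t
  have hχ't3 := hχ'3 t
  have hnonpos : deriv φ s ≤ 0 := by
    rw [hderiv]
    have h1 : -(8 / (c - s) ^ 2) * χ t ≤ 0 := by
      apply mul_nonpos_of_nonpos_of_nonneg _ hχt0
      have : 0 < (c - s) ^ 2 := by positivity
      have : 0 ≤ 8 / (c - s) ^ 2 := by positivity
      linarith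
    have h2 : -(8 / (c - s)) * (deriv χ t * (1 / s₀)) ≤ 0 := by
      apply mul_nonpos_of_nonpos_of_nonneg
      · have : 0 ≤ 8 / (c - s) := by positivity
        linarith
      · positivity
    linarith
  have habs : |deriv φ s|
      = 8 / (c - s) ^ 2 * χ t + 8 / (c - s) * (deriv χ t * (1 / s₀)) := by
    rw [abs_of_nonpos hnonpos, hderiv]; ring
  rw [hφ s, habs]
  rcases lt_or_ge s s₀ with hcase | hcase
  · -- s < s₀ : use the large lower bound on Q
    have hQ := hQbig s hs0 hcase
    have hrs : s₁ < c - s := by simp only [hc]; linarith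
    have hs₁0 : 0 < s₁ := lt_of_lt_of_le hs₀ hs₁
    have h2 : (0 : ℝ) < (c - s) ^ 2 := by positivity
    have hb1 : 4 * (8 / (c - s) ^ 2 * χ t) - (1 / 2) * (8 / (c - s) * χ t) ^ 2
        ≤ 8 / (s₁ * s₀) := by
      have heq : 4 * (8 / (c - s) ^ 2 * χ t) - (1 / 2) * (8 / (c - s) * χ t) ^ 2
          = (32 * χ t - 32 * (χ t) ^ 2) / (c - s) ^ 2 := by
        field_simp; ring
      rw [heq]
      have hnum : 32 * χ t - 32 * (χ t) ^ 2 ≤ 8 := by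
        nlinarith [sq_nonneg (1 - 2 * χ t)]
      have h3 : (32 * χ t - 32 * (χ t) ^ 2) / (c - s) ^ 2 ≤ 8 / (c - s) ^ 2 := by
        gcongr
      have h4 : 8 / (c - s) ^ 2 ≤ 8 / (s₁ * s₀) := by
        rw [div_le_div_iff₀ h2 (by positivity)]
        nlinarith [mul_le_mul hrs.le hrs.le hs₁0.le (by linarith : (0:ℝ) ≤ c - s),
          mul_le_mul_of_nonneg_left hs₁ hs₁0.le]
      linarith
    have hb2 : 4 * (8 / (c - s) * (deriv χ t * (1 / s₀))) ≤ 96 / (s₁ * s₀) := by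
      have h1 : 4 * (8 / (c - s) * (deriv χ t * (1 / s₀)))
          ≤ 4 * (8 / (c - s) * (3 * (1 / s₀))) := by
        have := mul_le_mul_of_nonneg_right hχ't3 (le_of_lt (by positivity : (0:ℝ) < 1 / s₀))
        nlinarith [le_of_lt (by positivity : (0:ℝ) < 8 / (c - s))]
      have heq : 4 * (8 / (c - s) * (3 * (1 / s₀))) = 96 / ((c - s) * s₀) := by
        field_simp
        norm_num
      have h2' : 96 / ((c - s) * s₀) ≤ 96 / (s₁ * s₀) := by
        rw [div_le_div_iff₀ (mul_pos hr hs₀) (mul_pos hs₁0 hs₀)]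
        nlinarith
      rw [heq] at h1
      linarith
    have hexp : (-(8 / (c - s)) * χ t) ^ 2 = (8 / (c - s) * χ t) ^ 2 := by ring
    rw [hexp]
    have h104 : (8 : ℝ) / (s₁ * s₀) + 96 / (s₁ * s₀) < 128 / (s₁ * s₀) := by
      rw [← add_div, div_lt_div_iff₀ (by positivity) (by positivity)]
      nlinarith
    linarith
  · -- s ≥ s₀ : χ t = 1 and deriv χ t = 0
    have ht1 : 1 ≤ t := (one_le_div hs₀).mpr hcase
    have hχt : χ t = 1 := hχb t ht1
    have hχ't : deriv χ t = 0 := by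
      have hmax : IsLocalMax χ t := by
        apply IsMaxOn.isLocalMax (s := Set.univ)
        · intro y _; rw [hχt]; exact hχ1 y
        · exact Filter.univ_mem
      exact hmax.deriv_eq_zero
    have hQ := hQpos s hs0 hslt
    rw [hχt, hχ't]
    have h2 : 0 < (c - s)^2 := by positivity
    have : (1:ℝ)/2 * (-(8 / (c - s)) * 1)^2 = 32 / (c - s)^2 := by
      field_simp; ring
    rw [this]
    have : 4 * (8 / (c - s) ^ 2 * 1 + 8 / (c - s) * (0 * (1 / s₀))) = 32 / (c-s)^2 := by ring
    rw [this]
    linarith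
end

section
/- For all real numbers s₀ and s₁ with s₁ ≥ s₀ > 0 there exists an infinitely differentiable function φ : [0, s₁+s₀) → ℝ such that φ ≤ 0, φ = 0 on [0, s₀/2], φ is monotone nonincreasing, φ(s) → −∞ as s → (s₁+s₀)⁻, |φ′(s)| ≤ 32/(s₁s₀) for all s ∈ [0, s₀), and |φ′(s)| ≤ (1/8)φ(s)² for all s ∈ [s₀, s₁+s₀). -/
open MeasureTheory Set Metric

noncomputable def stmt6Bump : ContDiffBump (3/4 : ℝ) :=
  ⟨1/6, 1/4, by norm_num, by norm_num⟩

noncomputable def stmt6Psi : ℝ → ℝ := stmt6Bump.normed volume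

lemma stmt6Psi_nonneg (x : ℝ) : 0 ≤ stmt6Psi x := stmt6Bump.nonneg_normed x

lemma stmt6Psi_le_three (x : ℝ) : stmt6Psi x ≤ 3 := by
  have h1 : (1/3 : ℝ) ≤ ∫ x, stmt6Bump x := by
    have := stmt6Bump.measure_closedBall_le_integral (μ := volume)
    rw [Measure.real, Real.volume_closedBall] at this
    refine le_trans ?_ this
    rw [ENNReal.toReal_ofReal (by linarith [stmt6Bump.rIn_pos] : (0:ℝ) ≤ 2 * stmt6Bump.rIn)]
    show (1/3 : ℝ) ≤ 2 * (1/6 : ℝ)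
    norm_num
  have h2 : stmt6Bump x ≤ 1 := stmt6Bump.le_one
  have hpos : (0:ℝ) < ∫ x, stmt6Bump x := stmt6Bump.integral_pos
  show stmt6Bump x / (∫ x, stmt6Bump x) ≤ 3
  rw [div_le_iff₀ hpos]
  nlinarith

lemma stmt6Psi_zero {x : ℝ} (hx : x ≤ 1/2 ∨ 1 ≤ x) : stmt6Psi x = 0 := by
  have : x ∉ Function.support stmt6Psi := by
    rw [show Function.support stmt6Psi = ball (3/4 : ℝ) (1/4) from
      stmt6Bump.support_normed_eq]
    simp only [mem_ball, Real.dist_eq, not_lt]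
    rcases hx with h | h
    · rw [abs_sub_comm, abs_of_nonneg (by linarith)]; linarith
    · rw [abs_of_nonneg (by linarith)]; linarith
  simpa [Function.mem_support, not_not] using this

lemma stmt6Psi_contDiff : ContDiff ℝ (⊤ : ℕ∞) stmt6Psi := stmt6Bump.contDiff_normed

lemma stmt6Psi_intble (a b : ℝ) : IntervalIntegrable stmt6Psi volume a b :=
  (stmt6Bump.integrable_normed).intervalIntegrable

noncomputable def stmt6Chi : ℝ → ℝ := fun x => ∫ t in (0:ℝ)..x, stmt6Psi t

lemma stmt6Chi_hasDerivAt (x : ℝ) : HasDerivAt stmt6Chi (stmt6Psi x) x :=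
  intervalIntegral.integral_hasDerivAt_right (stmt6Psi_intble 0 x)
    (stmt6Psi_contDiff.continuous.stronglyMeasurableAtFilter _ _)
    stmt6Psi_contDiff.continuous.continuousAt

lemma stmt6Chi_contDiff : ContDiff ℝ (⊤ : ℕ∞) stmt6Chi := by
  rw [contDiff_infty_iff_deriv]
  constructor
  · exact fun x => (stmt6Chi_hasDerivAt x).differentiableAt
  · have : deriv stmt6Chi = stmt6Psi := funext fun x => (stmt6Chi_hasDerivAt x).deriv
    rw [this]; exact stmt6Psi_contDiff

lemma stmt6Chi_mono : Monotone stmt6Chi := by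
  intro a b hab
  have h1 : stmt6Chi b - stmt6Chi a = ∫ t in a..b, stmt6Psi t := by
    rw [stmt6Chi, stmt6Chi, ← intervalIntegral.integral_add_adjacent_intervals
      (stmt6Psi_intble 0 a) (stmt6Psi_intble a b)]
    ring
  have h2 : (0:ℝ) ≤ ∫ t in a..b, stmt6Psi t :=
    intervalIntegral.integral_nonneg hab (fun u _ => stmt6Psi_nonneg u)
  linarith

lemma stmt6Chi_zero {x : ℝ} (hx : x ≤ 1/2) : stmt6Chi x = 0 := by
  rw [stmt6Chi]
  rw [intervalIntegral.integral_congr (g := fun _ => (0:ℝ)) ?_, intervalIntegral.integral_const]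
  · simp
  · intro t ht
    refine stmt6Psi_zero (Or.inl ?_)
    rcases Set.mem_uIcc.mp ht with ⟨_, h⟩ | ⟨_, h⟩ <;> linarith

lemma stmt6Chi_one {x : ℝ} (hx : 1 ≤ x) : stmt6Chi x = 1 := by
  rw [stmt6Chi, intervalIntegral.integral_of_le (by linarith)]
  rw [setIntegral_eq_integral_of_forall_compl_eq_zero]
  · exact stmt6Bump.integral_normed
  · intro t ht
    simp only [Set.mem_Ioc, not_and_or, not_lt, not_le] at ht
    rcases ht with h | h
    · exact stmt6Psi_zero (Or.inl (by linarith))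
    · exact stmt6Psi_zero (Or.inr (by linarith))

lemma stmt6Chi_nonneg (x : ℝ) : 0 ≤ stmt6Chi x := by
  rcases le_or_gt x (1/2) with h | h
  · rw [stmt6Chi_zero h]
  · rw [← stmt6Chi_zero (le_refl (1/2 : ℝ))]
    exact stmt6Chi_mono h.le

lemma stmt6Chi_le_one (x : ℝ) : stmt6Chi x ≤ 1 := by
  rcases le_or_gt 1 x with h | h
  · rw [stmt6Chi_one h]
  · rw [← stmt6Chi_one (le_refl (1 : ℝ))]
    exact stmt6Chi_mono h.le


/-- For all real numbers `s₀, s₁` with `s₁ ≥ s₀ > 0` there exists an infinitely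
differentiable function `φ` on `[0, s₁+s₀)` such that `φ ≤ 0`, `φ = 0` on `[0, s₀/2]`,
`φ` is monotone nonincreasing, `φ(s) → −∞` as `s → (s₁+s₀)⁻`, `|φ′(s)| ≤ 32/(s₁s₀)` on
`[0, s₀)`, and `|φ′(s)| ≤ (1/8)φ(s)²` on `[s₀, s₁+s₀)`. -/
theorem stmt_6 (s₀ s₁ : ℝ) (hs₀ : 0 < s₀) (hs₁ : s₀ ≤ s₁) :
    ∃ φ : ℝ → ℝ,
      ContDiffOn ℝ (⊤ : ℕ∞) φ (Set.Ico 0 (s₁ + s₀)) ∧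
      (∀ s ∈ Set.Ico (0 : ℝ) (s₁ + s₀), φ s ≤ 0) ∧
      (∀ s ∈ Set.Icc (0 : ℝ) (s₀ / 2), φ s = 0) ∧
      AntitoneOn φ (Set.Ico 0 (s₁ + s₀)) ∧
      Filter.Tendsto φ (nhdsWithin (s₁ + s₀) (Set.Iio (s₁ + s₀))) Filter.atBot ∧
      (∀ s ∈ Set.Ico (0 : ℝ) s₀, |deriv φ s| ≤ 32 / (s₁ * s₀)) ∧
      (∀ s ∈ Set.Ico s₀ (s₁ + s₀), |deriv φ s| ≤ (1 / 8) * (φ s) ^ 2) := by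
  have hs₁pos : 0 < s₁ := lt_of_lt_of_le hs₀ hs₁
  set c := s₁ + s₀ with hc
  have hcpos : 0 < c := by positivity
  have hs₀c : s₀ < c := by simp only [hc]; linarith
  set φ : ℝ → ℝ := fun s => -(8 * stmt6Chi (s / s₀) * (c - s)⁻¹) with hφ
  -- derivative
  have hderiv : ∀ s < c, HasDerivAt φ
      (-(8 * (stmt6Psi (s / s₀) / s₀) * (c - s)⁻¹ + 8 * stmt6Chi (s / s₀) / (c - s) ^ 2)) s := by
    intro s hs
    have hne : c - s ≠ 0 := sub_ne_zero.mpr (ne_of_gt hs)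
    have hu : HasDerivAt (fun s => stmt6Chi (s / s₀)) (stmt6Psi (s / s₀) * (1 / s₀)) s := by
      have := (stmt6Chi_hasDerivAt (s / s₀)).comp s ((hasDerivAt_id s).div_const s₀)
      simpa [Function.comp_def] using this
    have hv : HasDerivAt (fun s => (c - s)⁻¹) (-(0 - 1) / (c - s) ^ 2) s :=
      ((hasDerivAt_const s c).sub (hasDerivAt_id s)).inv hne
    have := ((hu.const_mul (8:ℝ)).mul hv).neg
    exact this.congr_deriv (by ring)
  have hderiv' : ∀ s < c, deriv φ s
      = -(8 * (stmt6Psi (s / s₀) / s₀) * (c - s)⁻¹ + 8 * stmt6Chi (s / s₀) / (c - s) ^ 2) :=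
    fun s hs => (hderiv s hs).deriv
  refine ⟨φ, ?_, ?_, ?_, ?_, ?_, ?_, ?_⟩
  · -- ContDiffOn
    apply ContDiffOn.mono (s := Set.Iio c) _ (fun x hx => hx.2)
    have h1 : ContDiffOn ℝ (⊤ : ℕ∞) (fun s : ℝ => (c - s)⁻¹) (Set.Iio c) :=
      ContDiffOn.inv (contDiff_const.sub contDiff_id).contDiffOn
        (fun x hx => sub_ne_zero.mpr (ne_of_gt hx))
    have h2 : ContDiff ℝ (⊤ : ℕ∞) (fun s : ℝ => stmt6Chi (s / s₀)) :=
      stmt6Chi_contDiff.comp (contDiff_id.div_const s₀)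
    exact ((contDiffOn_const.mul h2.contDiffOn).mul h1).neg
  · -- nonpos
    intro s hs
    have h1 : 0 ≤ (c - s)⁻¹ := by
      have : 0 < c - s := sub_pos.mpr hs.2
      positivity
    have := stmt6Chi_nonneg (s / s₀)
    simp only [hφ, neg_nonpos]
    positivity
  · -- zero on [0, s₀/2]
    intro s hs
    have : s / s₀ ≤ 1 / 2 := by
      rw [div_le_div_iff₀ hs₀ (by norm_num)]
      linarith [hs.2]
    simp [hφ, stmt6Chi_zero this]
  · -- antitone
    intro a ha b hb hab
    simp only [hφ, neg_le_neg_iff]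
    have hca : 0 < c - a := sub_pos.mpr ha.2
    have hcb : 0 < c - b := sub_pos.mpr hb.2
    have h1 : stmt6Chi (a / s₀) ≤ stmt6Chi (b / s₀) :=
      stmt6Chi_mono (by gcongr)
    have h2 : (c - a)⁻¹ ≤ (c - b)⁻¹ := inv_anti₀ hcb (by linarith)
    have h3 := stmt6Chi_nonneg (a / s₀)
    nlinarith [stmt6Chi_nonneg (b / s₀), inv_nonneg.mpr hca.le, inv_nonneg.mpr hcb.le]
  · -- tendsto atBot
    have hev : φ =ᶠ[nhdsWithin c (Set.Iio c)] fun s => -(8 * (c - s)⁻¹) := by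
      filter_upwards [Ioo_mem_nhdsLT_of_mem (Set.mem_Ioc.mpr ⟨hs₀c, le_refl c⟩)] with s hs
      have : (1:ℝ) ≤ s / s₀ := (one_le_div hs₀).mpr hs.1.le
      simp [hφ, stmt6Chi_one this]
    refine Filter.Tendsto.congr' hev.symm ?_
    have h1 : Filter.Tendsto (fun s => c - s) (nhdsWithin c (Set.Iio c)) (nhdsWithin 0 (Set.Ioi 0)) := by
      apply tendsto_nhdsWithin_of_tendsto_nhds_of_eventually_within
      · have : Filter.Tendsto (fun s => c - s) (nhds c) (nhds (c - c)) :=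
          (continuous_const.sub continuous_id).tendsto c
        rw [sub_self] at this
        exact this.mono_left nhdsWithin_le_nhds
      · filter_upwards [self_mem_nhdsWithin] with s hs
        exact sub_pos.mpr (Set.mem_Iio.mp hs)
    have h2 : Filter.Tendsto (fun s => (c - s)⁻¹) (nhdsWithin c (Set.Iio c)) Filter.atTop :=
      tendsto_inv_nhdsGT_zero.comp h1
    have h3 : Filter.Tendsto (fun s => 8 * (c - s)⁻¹) (nhdsWithin c (Set.Iio c)) Filter.atTop :=
      h2.const_mul_atTop (by norm_num)
    exact Filter.tendsto_neg_atTop_atBot.comp h3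
  · -- bound on [0, s₀)
    intro s hs
    have hsc : s < c := lt_trans hs.2 hs₀c
    have hd : 0 < c - s := sub_pos.mpr hsc
    have hds : s₁ ≤ c - s := by simp only [hc]; linarith [hs.2]
    rw [hderiv' s hsc, abs_neg]
    have hψ0 := stmt6Psi_nonneg (s / s₀)
    have hψ3 := stmt6Psi_le_three (s / s₀)
    have hχ0 := stmt6Chi_nonneg (s / s₀)
    have hχ1 := stmt6Chi_le_one (s / s₀)
    have hinv : (c - s)⁻¹ ≤ s₁⁻¹ := inv_anti₀ hs₁pos hds
    have hinv0 : 0 ≤ (c - s)⁻¹ := inv_nonneg.mpr hd.le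
    have hi1 : 0 < s₁⁻¹ := inv_pos.mpr hs₁pos
    have hi0 : 0 < s₀⁻¹ := inv_pos.mpr hs₀
    have hi10 : s₁⁻¹ ≤ s₀⁻¹ := inv_anti₀ hs₀ hs₁
    rw [abs_of_nonneg (by positivity)]
    have k1 : stmt6Psi (s / s₀) * (c - s)⁻¹ ≤ 3 * s₁⁻¹ :=
      mul_le_mul hψ3 hinv hinv0 (by norm_num)
    have e1 : 8 * (stmt6Psi (s / s₀) / s₀) * (c - s)⁻¹ ≤ 24 * s₀⁻¹ * s₁⁻¹ := by
      have : 8 * (stmt6Psi (s / s₀) / s₀) * (c - s)⁻¹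
          = 8 * s₀⁻¹ * (stmt6Psi (s / s₀) * (c - s)⁻¹) := by
        rw [div_eq_mul_inv]; ring
      rw [this]
      have := mul_le_mul_of_nonneg_left k1 (by positivity : (0:ℝ) ≤ 8 * s₀⁻¹)
      linarith
    have k2 : ((c - s)⁻¹) ^ 2 ≤ s₀⁻¹ * s₁⁻¹ := by
      rw [sq]
      exact mul_le_mul (hinv.trans hi10) hinv hinv0 hi0.le
    have e2 : 8 * stmt6Chi (s / s₀) / (c - s) ^ 2 ≤ 8 * s₀⁻¹ * s₁⁻¹ := by
      rw [div_eq_mul_inv, ← inv_pow]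
      calc 8 * stmt6Chi (s / s₀) * ((c - s)⁻¹) ^ 2
          ≤ (8 * 1) * (s₀⁻¹ * s₁⁻¹) :=
            mul_le_mul (by linarith) k2 (sq_nonneg _) (by norm_num)
        _ = 8 * s₀⁻¹ * s₁⁻¹ := by ring
    have : 32 / (s₁ * s₀) = 24 * s₀⁻¹ * s₁⁻¹ + 8 * s₀⁻¹ * s₁⁻¹ := by
      field_simp; ring
    linarith
  · -- bound on [s₀, c)
    intro s hs
    have hsc : s < c := hs.2
    have hd : 0 < c - s := sub_pos.mpr hsc
    have h1 : (1:ℝ) ≤ s / s₀ := (one_le_div hs₀).mpr hs.1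
    have hne : c - s ≠ 0 := hd.ne'
    rw [hderiv' s hsc, stmt6Psi_zero (Or.inr h1), stmt6Chi_one h1]
    have hl : |-(8 * ((0:ℝ) / s₀) * (c - s)⁻¹ + 8 * 1 / (c - s) ^ 2)| = 8 / (c - s) ^ 2 := by
      rw [zero_div, mul_zero, zero_mul, zero_add, mul_one, abs_neg,
        abs_of_nonneg (by positivity)]
    rw [hl]
    have hφs : φ s = -(8 * (c - s)⁻¹) := by simp [hφ, stmt6Chi_one h1]
    rw [hφs, neg_sq]
    have : (1:ℝ) / 8 * (8 * (c - s)⁻¹) ^ 2 = 8 / (c - s) ^ 2 := by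
      field_simp
    rw [this]
end

section
/- Let (X, d) be a metric space, let n ≥ 8 be an integer, let S ⊆ X be nonempty, let t₀ > 0 and set t_l = 4^{−l}·t₀ for each positive integer l. For each l ≥ 1 let S^{(l)} be a finite subset of S such that for every q ∈ S there exists p ∈ S^{(l)} with d(p, q) ≤ 2√t_l. Let ζ : (0,∞) → ℝ be nonnegative with ζ(t) ≥ (2/(n−3))·t^{(3−n)/2} for all t ∈ (0, t₀]. Let x ∈ X with 0 < d(x, S) < (1/4)√t₀, and suppose the family of nonnegative terms t_l^{(n−5)/2}·ζ(d(p,x)²), indexed by pairs (l, p) with l ≥ 1 and p ∈ S^{(l)}, is summable with sum Ψ(x). Then Ψ(x) ≥ (1/(2(n−3)))·3^{3−n}·d(x, S)^{−2}. -/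
/-!
Ψ(x) dominates each of its terms, so it suffices to find one good pair `(l, p)`. Let
`d = d(x, S)` and pick the dyadic scale `s = √t_l ∈ (d, 2d]`, which exists with `l ≥ 2`
because `d < √t₀ / 4`. A point `q ∈ S` with `d(x, q) < s` and a net point `p ∈ S^{(l)}` with
`d(p, q) ≤ 2s` give `d ≤ D := d(p, x) < 3s ≤ 6d`, hence `D² ≤ t₀` and
`t_l^{(n-5)/2} ζ(D²) ≥ (2/(n-3)) s^{n-5} D^{3-n} ≥ (2/(n-3)) 3^{5-n} D^{-2}
≥ (2/(n-3)) 3^{5-n} (6d)^{-2}`, which is the claimed bound.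
-/

theorem exists_div_two_pow_mem_Ioc {a d : ℝ} (hd : 0 < d) (hda : d < a) :
    ∃ k : ℕ, a / 2 ^ k ∈ Set.Ioc d (2 * d) := by
  obtain ⟨n, hlo, hhi⟩ := exists_mem_Ioc_zpow (div_pos (hd.trans hda) hd) one_lt_two
  have hn : 0 ≤ n := by
    have : (1 : ℝ) < 2 ^ (n + 1) := ((one_lt_div hd).2 hda).trans_le hhi
    have := (one_lt_zpow_iff_right₀ one_lt_two).1 this
    omega
  lift n to ℕ using hn
  rw [zpow_natCast, lt_div_iff₀ hd] at hlo
  rw [zpow_add_one₀ two_ne_zero, zpow_natCast, div_le_iff₀ hd] at hhi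
  exact ⟨n, (lt_div_iff₀ (by positivity)).2 (by linarith),
    (div_le_iff₀ (by positivity)).2 (by linarith)⟩

theorem four_rpow_neg_natCast_mul (l : ℕ) {t₀ : ℝ} (ht₀ : 0 ≤ t₀) :
    (4 : ℝ) ^ (-(l : ℝ)) * t₀ = (√t₀ / 2 ^ l) ^ 2 := by
  rw [Real.rpow_neg (by norm_num), Real.rpow_natCast, div_pow, Real.sq_sqrt ht₀, ← pow_mul,
    mul_comm l, pow_mul]
  norm_num
  ring

theorem sq_rpow_half {s : ℝ} (hs : 0 ≤ s) (e : ℝ) : (s ^ 2) ^ (e / 2) = s ^ e := by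
  rw [← Real.rpow_natCast_mul hs, Nat.cast_ofNat, mul_div_cancel₀ _ two_ne_zero]

theorem three_rpow_mul_rpow_neg_two_le {m s D : ℝ} (hm : 5 ≤ m) (hD : 0 < D)
    (hDs : D ≤ 3 * s) :
    3 ^ (5 - m) * D ^ (-2 : ℝ) ≤ (s ^ 2) ^ ((m - 5) / 2) * (D ^ 2) ^ ((3 - m) / 2) := by
  rw [sq_rpow_half (by linarith), sq_rpow_half hD.le]
  have hsplit : 3 ^ (5 - m) * D ^ (-2 : ℝ) = (D / 3) ^ (m - 5) * D ^ (3 - m) := by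
    rw [Real.div_rpow hD.le (by norm_num), div_mul_eq_mul_div, ← Real.rpow_add hD,
      show 5 - m = -(m - 5) by ring, Real.rpow_neg (by norm_num)]
    ring_nf
  rw [hsplit]
  gcongr
  linarith

theorem one_div_mul_three_rpow_mul_rpow_neg_two {m d : ℝ} (hd : 0 < d) :
    1 / (2 * (m - 3)) * 3 ^ (3 - m) * d ^ (-2 : ℝ)
      = 2 / (m - 3) * 3 ^ (5 - m) * (6 * d) ^ (-2 : ℝ) := by
  rw [Real.mul_rpow (by norm_num) hd.le, show (5 : ℝ) - m = 2 + (3 - m) by ring,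
    Real.rpow_add (by norm_num)]
  norm_num
  ring

theorem le_sq_rpow_mul_of_le_three_mul {m d s D z : ℝ} (hm : 5 ≤ m) (hd : 0 < d)
    (hdD : d ≤ D) (hDs : D ≤ 3 * s) (hDd : D ≤ 6 * d)
    (hz : 2 / (m - 3) * (D ^ 2) ^ ((3 - m) / 2) ≤ z) :
    1 / (2 * (m - 3)) * 3 ^ (3 - m) * d ^ (-2 : ℝ) ≤ (s ^ 2) ^ ((m - 5) / 2) * z := by
  have hm3 : 0 ≤ 2 / (m - 3) := div_nonneg zero_le_two (by linarith)
  calc 1 / (2 * (m - 3)) * 3 ^ (3 - m) * d ^ (-2 : ℝ)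
      = 2 / (m - 3) * (3 ^ (5 - m) * (6 * d) ^ (-2 : ℝ)) := by
        rw [one_div_mul_three_rpow_mul_rpow_neg_two hd, mul_assoc]
    _ ≤ 2 / (m - 3) * (3 ^ (5 - m) * D ^ (-2 : ℝ)) := by
        refine mul_le_mul_of_nonneg_left (mul_le_mul_of_nonneg_left ?_ (by positivity)) hm3
        exact Real.rpow_le_rpow_of_nonpos (hd.trans_le hdD) hDd (by norm_num)
    _ ≤ 2 / (m - 3) * ((s ^ 2) ^ ((m - 5) / 2) * (D ^ 2) ^ ((3 - m) / 2)) :=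
        mul_le_mul_of_nonneg_left (three_rpow_mul_rpow_neg_two_le hm (hd.trans_le hdD) hDs) hm3
    _ = (s ^ 2) ^ ((m - 5) / 2) * (2 / (m - 3) * (D ^ 2) ^ ((3 - m) / 2)) := by ring
    _ ≤ (s ^ 2) ^ ((m - 5) / 2) * z := by gcongr

theorem Metric.exists_mem_dist_lt_three_mul_of_infDist_lt {X : Type*} [PseudoMetricSpace X]
    {S N : Set X} {x : X} {s : ℝ} (hS : S.Nonempty) (hxS : infDist x S < s)
    (hN : ∀ q ∈ S, ∃ p ∈ N, dist p q ≤ 2 * s) : ∃ p ∈ N, dist p x < 3 * s := by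
  obtain ⟨q, hqS, hxq⟩ := (infDist_lt_iff hS).1 hxS
  obtain ⟨p, hpN, hpq⟩ := hN q hqS
  exact ⟨p, hpN, by linarith [dist_triangle p q x, dist_comm x q]⟩

/-- Let `(X, d)` be a metric space, `n ≥ 8` an integer, `S ⊆ X` nonempty,
`t₀ > 0`, `t_l = 4^{−l}·t₀`. For each `l ≥ 1` let `S^{(l)}` be a finite subset of `S` such
that every `q ∈ S` has some `p ∈ S^{(l)}` with `d(p, q) ≤ 2√t_l`. Let `ζ : (0,∞) → ℝ` be
nonnegative with `ζ(t) ≥ (2/(n−3))·t^{(3−n)/2}` for `t ∈ (0, t₀]`. Let `x ∈ X` with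
`0 < d(x, S) < (1/4)√t₀`, and suppose the family of nonnegative terms
`t_l^{(n−5)/2}·ζ(d(p,x)²)`, indexed by pairs `(l, p)` with `l ≥ 1`, `p ∈ S^{(l)}`, is
summable with sum `Ψ(x)`. Then `Ψ(x) ≥ (1/(2(n−3)))·3^{3−n}·d(x, S)^{−2}`. -/
theorem stmt_11 {X : Type*} [MetricSpace X] (n : ℕ) (hn : 8 ≤ n)
    (S : Set X) (hS : S.Nonempty) (t₀ : ℝ) (ht₀ : 0 < t₀)
    (t : ℕ → ℝ) (ht : ∀ l : ℕ, 1 ≤ l → t l = (4 : ℝ) ^ (-(l : ℝ)) * t₀)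
    (S' : ℕ → Finset X) (hsub : ∀ l : ℕ, 1 ≤ l → ↑(S' l) ⊆ S)
    (hnet : ∀ l : ℕ, 1 ≤ l → ∀ q ∈ S, ∃ p ∈ S' l, dist p q ≤ 2 * Real.sqrt (t l))
    (ζ : ℝ → ℝ) (hζ0 : ∀ s : ℝ, 0 < s → 0 ≤ ζ s)
    (hζ : ∀ s : ℝ, 0 < s → s ≤ t₀ → (2 / ((n : ℝ) - 3)) * s ^ (((3 : ℝ) - n) / 2) ≤ ζ s)
    (x : X) (hx0 : 0 < Metric.infDist x S)
    (hx1 : Metric.infDist x S < (1 / 4) * Real.sqrt t₀)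
    (Ψx : ℝ)
    (hΨ : HasSum (fun lp : Σ l : ℕ, {p : X // p ∈ S' (l + 1)} =>
      t (lp.1 + 1) ^ (((n : ℝ) - 5) / 2) * ζ (dist (lp.2 : X) x ^ 2)) Ψx) :
    (1 / (2 * ((n : ℝ) - 3))) * (3 : ℝ) ^ ((3 : ℝ) - n) * Metric.infDist x S ^ (-2 : ℝ)
      ≤ Ψx := by
  set d := Metric.infDist x S
  have hd_le_dist : ∀ l, 1 ≤ l → ∀ p ∈ S' l, d ≤ dist p x := fun l hl p hp =>
    dist_comm x p ▸ Metric.infDist_le_dist_of_mem (hsub l hl hp)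
  have hterm_nonneg : ∀ lp : Σ l : ℕ, {p : X // p ∈ S' (l + 1)},
      0 ≤ t (lp.1 + 1) ^ (((n : ℝ) - 5) / 2) * ζ (dist (lp.2 : X) x ^ 2) :=
    fun ⟨l, p, hp⟩ => mul_nonneg (Real.rpow_nonneg (ht (l + 1) (by omega) ▸ by positivity) _)
      (hζ0 _ (pow_pos (hx0.trans_le (hd_le_dist _ (by omega) p hp)) 2))
  obtain ⟨k, hds, hs2d⟩ := exists_div_two_pow_mem_Ioc hx0 (by linarith : d < √t₀ / 4)
  set s := √t₀ / 4 / 2 ^ k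
  have hts : t (k + 2) = s ^ 2 := by
    rw [ht _ (by omega), four_rpow_neg_natCast_mul _ ht₀.le, pow_add]
    ring
  have hnet_s : ∀ q ∈ S, ∃ p ∈ (S' (k + 2) : Set X), dist p q ≤ 2 * s := by
    simpa only [Finset.mem_coe, hts, Real.sqrt_sq (by positivity : 0 ≤ s)]
      using hnet (k + 2) (by omega)
  obtain ⟨p, hp, hpx⟩ := Metric.exists_mem_dist_lt_three_mul_of_infDist_lt hS hds hnet_s
  have hdD : d ≤ dist p x := hd_le_dist _ (by omega) p hp
  have hs_le : s ≤ √t₀ / 4 := div_le_self (by positivity) (one_le_pow₀ one_le_two)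
  have hDt₀ : dist p x ^ 2 ≤ t₀ := by
    rw [← Real.sq_sqrt ht₀.le]
    gcongr
    linarith
  calc 1 / (2 * ((n : ℝ) - 3)) * 3 ^ ((3 : ℝ) - n) * d ^ (-2 : ℝ)
      ≤ t (k + 2) ^ (((n : ℝ) - 5) / 2) * ζ (dist p x ^ 2) := by
        rw [hts]
        exact le_sq_rpow_mul_of_le_three_mul (by exact_mod_cast (by omega : 5 ≤ n)) hx0
          hdD hpx.le (by linarith) (hζ _ (pow_pos (hx0.trans_le hdD) 2) hDt₀)
    _ ≤ Ψx := le_hasSum hΨ ⟨k + 1, p, hp⟩ fun lp _ => hterm_nonneg lp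
end

section
/- Let n ≥ 4 be an integer and define ψ on ℝⁿ ∖ {0} by ψ(x) = (2/(n−3))·‖x‖^{3−n} + (4/(2n−7))·‖x‖^{(7−2n)/2}. Then for every x ≠ 0, every unit vector ξ ∈ ℝⁿ, and every orthonormal basis (e₁, …, e_n) of ℝⁿ, one has Σ_{i=1}^{n} D²ψ(x)(e_i, e_i) − D²ψ(x)(ξ, ξ) ≤ −‖x‖^{(3−2n)/2}, where D²ψ(x) denotes the second Fréchet derivative (Hessian) of ψ at x. -/
open RealInnerProductSpace

noncomputable def innSL (n : ℕ) :
    EuclideanSpace ℝ (Fin n) →L[ℝ] EuclideanSpace ℝ (Fin n) →L[ℝ] ℝ := innerSL ℝ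

@[simp] lemma innSL_apply {n : ℕ} (v w : EuclideanSpace ℝ (Fin n)) : innSL n v w = ⟪v, w⟫ := rfl

lemma L1 {n : ℕ} (x : EuclideanSpace ℝ (Fin n)) :
    HasFDerivAt (fun z : EuclideanSpace ℝ (Fin n) => ⟪z, z⟫) ((2:ℝ) • (innerSL ℝ x)) x := by
  have h := (hasFDerivAt_id x).inner ℝ (hasFDerivAt_id x)
  refine h.congr_fderiv ?_
  ext v
  simp [fderivInnerCLM, real_inner_comm, two_mul, mul_comm]

lemma Lne {n : ℕ} (x : EuclideanSpace ℝ (Fin n)) (hx : x ≠ 0) : ⟪x, x⟫ ≠ 0 := by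
  rw [real_inner_self_eq_norm_sq]
  exact pow_ne_zero 2 (norm_ne_zero_iff.2 hx)

lemma Lval {n : ℕ} (y : EuclideanSpace ℝ (Fin n)) (p : ℝ) :
    ⟪y, y⟫ ^ p = ‖y‖ ^ (2 * p) := by
  rw [real_inner_self_eq_norm_sq, ← Real.rpow_natCast ‖y‖ 2,
    ← Real.rpow_mul (norm_nonneg y)]
  norm_num

lemma L2 {n : ℕ} (x : EuclideanSpace ℝ (Fin n)) (hx : x ≠ 0) (p : ℝ) :
    HasFDerivAt (fun z : EuclideanSpace ℝ (Fin n) => ⟪z, z⟫ ^ p)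
      ((2 * p * ⟪x, x⟫ ^ (p - 1)) • innerSL ℝ x) x := by
  have h := (L1 x).rpow_const (p := p) (Or.inl (Lne x hx))
  refine h.congr_fderiv ?_
  rw [smul_smul]
  ring_nf

lemma L3 {n : ℕ} (x : EuclideanSpace ℝ (Fin n)) (hx : x ≠ 0) (κ q : ℝ) :
    HasFDerivAt (fun z : EuclideanSpace ℝ (Fin n) => (κ * ⟪z, z⟫ ^ q) • innerSL ℝ z)
      ((κ * ⟪x, x⟫ ^ q) • (innSL n)
        + ((κ * (2 * q * ⟪x, x⟫ ^ (q - 1))) • innerSL ℝ x).smulRight (innerSL ℝ x)) x := by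
  have hc : HasFDerivAt (fun z : EuclideanSpace ℝ (Fin n) => κ * ⟪z, z⟫ ^ q)
      ((κ * (2 * q * ⟪x, x⟫ ^ (q - 1))) • innerSL ℝ x) x := by
    have := (L2 x hx q).const_mul κ
    rwa [smul_smul] at this
  have hf : HasFDerivAt (fun z : EuclideanSpace ℝ (Fin n) => innerSL ℝ z) (innSL n) x :=
    (innSL n).hasFDerivAt
  exact hc.smul hf


set_option maxHeartbeats 1000000 in
/-- Let `n ≥ 4` and define `ψ` on `ℝⁿ ∖ {0}` by
`ψ(x) = (2/(n−3))·‖x‖^{3−n} + (4/(2n−7))·‖x‖^{(7−2n)/2}`. Then for every `x ≠ 0`, every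
unit vector `ξ`, and every orthonormal basis `(e₁, …, e_n)` of `ℝⁿ`,
`Σ_i D²ψ(x)(e_i, e_i) − D²ψ(x)(ξ, ξ) ≤ −‖x‖^{(3−2n)/2}`, where `D²ψ(x)` is the second
Fréchet derivative (Hessian) of `ψ` at `x`. -/
theorem stmt_13 (n : ℕ) (hn : 4 ≤ n)
    (ψ : EuclideanSpace ℝ (Fin n) → ℝ)
    (hψ : ∀ x : EuclideanSpace ℝ (Fin n), x ≠ 0 →
      ψ x = (2 / ((n : ℝ) - 3)) * ‖x‖ ^ ((3 : ℝ) - n)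
        + (4 / (2 * (n : ℝ) - 7)) * ‖x‖ ^ (((7 : ℝ) - 2 * n) / 2)) :
    ∀ x : EuclideanSpace ℝ (Fin n), x ≠ 0 →
    ∀ ξ : EuclideanSpace ℝ (Fin n), ‖ξ‖ = 1 →
    ∀ b : OrthonormalBasis (Fin n) ℝ (EuclideanSpace ℝ (Fin n)),
      (∑ i, fderiv ℝ (fderiv ℝ ψ) x (b i) (b i)) - fderiv ℝ (fderiv ℝ ψ) x ξ ξ
        ≤ -‖x‖ ^ (((3 : ℝ) - 2 * n) / 2) := by
  intro x hx ξ hξ b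
  have hn4 : (4:ℝ) ≤ (n:ℝ) := by exact_mod_cast hn
  have h3 : ((n:ℝ) - 3) ≠ 0 := by linarith
  have h7 : (2 * (n:ℝ) - 7) ≠ 0 := by linarith
  set p₁ : ℝ := ((3:ℝ) - n) / 2 with hp₁
  set p₂ : ℝ := ((7:ℝ) - 2 * n) / 4 with hp₂
  set q₁ : ℝ := ((1:ℝ) - n) / 2 with hq₁
  set q₂ : ℝ := ((3:ℝ) - 2 * n) / 4 with hq₂
  set c₁ : ℝ := 2 / ((n:ℝ) - 3) with hc₁
  set c₂ : ℝ := 4 / (2 * (n:ℝ) - 7) with hc₂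
  -- the fixed first-derivative function
  set F : EuclideanSpace ℝ (Fin n) → (EuclideanSpace ℝ (Fin n) →L[ℝ] ℝ) :=
    fun z => ((-2:ℝ) * ⟪z, z⟫ ^ q₁) • innerSL ℝ z + ((-2:ℝ) * ⟪z, z⟫ ^ q₂) • innerSL ℝ z
    with hF
  -- ψ's value in inner-product form
  have hval : ∀ y : EuclideanSpace ℝ (Fin n), y ≠ 0 →
      ψ y = c₁ * ⟪y, y⟫ ^ p₁ + c₂ * ⟪y, y⟫ ^ p₂ := by
    intro y hy
    have e1 : (3:ℝ) - n = 2 * p₁ := by rw [hp₁]; ring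
    have e2 : ((7:ℝ) - 2 * n) / 2 = 2 * p₂ := by rw [hp₂]; ring
    rw [hψ y hy, e1, e2, Lval, Lval]
  -- first derivative of ψ at every y ≠ 0
  have hder : ∀ y : EuclideanSpace ℝ (Fin n), y ≠ 0 → HasFDerivAt ψ (F y) y := by
    intro y hy
    have h1 := ((L2 y hy p₁).const_mul c₁).add ((L2 y hy p₂).const_mul c₂)
    have hcongr : HasFDerivAt ψ
        (c₁ • ((2 * p₁ * ⟪y, y⟫ ^ (p₁ - 1)) • innerSL ℝ y)
          + c₂ • ((2 * p₂ * ⟪y, y⟫ ^ (p₂ - 1)) • innerSL ℝ y)) y := by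
      apply h1.congr_of_eventuallyEq
      have hmem : {z : EuclideanSpace ℝ (Fin n) | z ≠ 0} ∈ nhds y :=
        isOpen_compl_singleton.mem_nhds hy
      exact Filter.eventually_of_mem hmem fun z hz => hval z hz
    have e1 : p₁ - 1 = q₁ := by rw [hp₁, hq₁]; ring
    have e2 : p₂ - 1 = q₂ := by rw [hp₂, hq₂]; ring
    have k1 : c₁ * (2 * p₁ * ⟪y, y⟫ ^ (p₁ - 1)) = -2 * ⟪y, y⟫ ^ q₁ := by
      rw [e1, hc₁, hp₁]; field_simp; ring
    have k2 : c₂ * (2 * p₂ * ⟪y, y⟫ ^ (p₂ - 1)) = -2 * ⟪y, y⟫ ^ q₂ := by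
      rw [e2, hc₂, hp₂]; field_simp; ring
    rw [smul_smul, smul_smul, k1, k2] at hcongr
    exact hcongr
  -- second derivative
  set G : EuclideanSpace ℝ (Fin n) →L[ℝ] EuclideanSpace ℝ (Fin n) →L[ℝ] ℝ :=
    ((-2 * ⟪x, x⟫ ^ q₁) • (innSL n)
        + (((-2:ℝ) * (2 * q₁ * ⟪x, x⟫ ^ (q₁ - 1))) • innerSL ℝ x).smulRight (innerSL ℝ x))
    + ((-2 * ⟪x, x⟫ ^ q₂) • (innSL n)
        + (((-2:ℝ) * (2 * q₂ * ⟪x, x⟫ ^ (q₂ - 1))) • innerSL ℝ x).smulRight (innerSL ℝ x))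
    with hG
  have hFG : HasFDerivAt F G x := (L3 x hx (-2) q₁).add (L3 x hx (-2) q₂)
  have hsecond : fderiv ℝ (fderiv ℝ ψ) x = G := by
    have hev : fderiv ℝ ψ =ᶠ[nhds x] F := by
      have hmem : {z : EuclideanSpace ℝ (Fin n) | z ≠ 0} ∈ nhds x :=
        isOpen_compl_singleton.mem_nhds hx
      exact Filter.eventually_of_mem hmem fun z hz => (hder z hz).fderiv
    exact (hFG.congr_of_eventuallyEq hev).fderiv
  rw [hsecond]
  -- explicit formula for G
  set t : ℝ := ⟪x, x⟫ with hts
  have hGapp : ∀ v w : EuclideanSpace ℝ (Fin n),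
      G v w = (-2 * t ^ q₁ + -2 * t ^ q₂) * ⟪v, w⟫
        + (-2 * (2 * q₁ * t ^ (q₁ - 1)) + -2 * (2 * q₂ * t ^ (q₂ - 1)))
            * (⟪x, v⟫ * ⟪x, w⟫) := by
    intro v w
    rw [hG]
    simp only [ContinuousLinearMap.add_apply, ContinuousLinearMap.smul_apply,
      ContinuousLinearMap.smulRight_apply, innSL_apply, innerSL_apply_apply,
      innerSL_apply_apply, smul_eq_mul, ← hts]
    ring
  have ht : 0 < t := by
    rw [hts, real_inner_self_eq_norm_sq]
    exact pow_pos (norm_pos_iff.2 hx) 2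
  have hξξ : ⟪ξ, ξ⟫ = 1 := by
    rw [real_inner_self_eq_norm_sq, hξ]; norm_num
  have hs1 : ∑ i, ⟪b i, b i⟫ = (n : ℝ) := by
    have : ∀ i, ⟪b i, b i⟫ = (1:ℝ) := fun i => by
      rw [real_inner_self_eq_norm_sq, b.orthonormal.1 i]; norm_num
    simp [this]
  have hs2 : ∑ i, ⟪x, b i⟫ * ⟪x, b i⟫ = t := by
    rw [hts, ← b.sum_inner_mul_inner x x]
    congr 1; ext i; rw [real_inner_comm (b i) x]
  simp_rw [hGapp]
  rw [Finset.sum_add_distrib, ← Finset.mul_sum, ← Finset.mul_sum, hs1, hs2, hξξ]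
  -- now pure real arithmetic
  set s : ℝ := ⟪x, ξ⟫ * ⟪x, ξ⟫ with hss
  have hs : 0 ≤ s := mul_self_nonneg _
  have hB1 : (0:ℝ) < t ^ (q₁ - 1) := Real.rpow_pos_of_pos ht _
  have hB2 : (0:ℝ) < t ^ (q₂ - 1) := Real.rpow_pos_of_pos ht _
  have hA1 : t ^ (q₁ - 1) * t = t ^ q₁ := by
    nth_rewrite 2 [← Real.rpow_one t]
    rw [← Real.rpow_add ht]; norm_num
  have hA2 : t ^ (q₂ - 1) * t = t ^ q₂ := by
    nth_rewrite 2 [← Real.rpow_one t]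
    rw [← Real.rpow_add ht]; norm_num
  have hRHS : -‖x‖ ^ (((3:ℝ) - 2 * n) / 2) = -(t ^ q₂) := by
    have e : ((3:ℝ) - 2 * n) / 2 = 2 * q₂ := by rw [hq₂]; ring
    rw [hts, Lval, e]
  rw [hRHS]
  nlinarith [mul_nonneg hB1.le hs, mul_nonneg hB2.le hs,
    mul_nonneg (mul_nonneg hB1.le hs) (by linarith : (0:ℝ) ≤ (n:ℝ) - 1),
    mul_nonneg (mul_nonneg hB2.le hs) (by linarith : (0:ℝ) ≤ 2 * (n:ℝ) - 3),
    hA1, hA2, Real.rpow_pos_of_pos ht q₁, Real.rpow_pos_of_pos ht q₂]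
end
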